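/- Let r ≥ 0 and k ≥ r be integers, let n ≥ 0 and f1 ≥ 0 be integers, and let t_1, …, t_n be integers with t_i ≥ 2 for every i; set Ω_i = Ω(t_i,r), a_i = a(t_i,r), b_i = b(t_i,r). Then, as integers, C(k+2,2) + f1·C(k+2−(r+1),2) − Σ_{i=1}^{n} [ t_i·C(k+2−(r+1),2) − b_i·C(k+2−Ω_i,2) − a_i·C(k+2−(Ω_i+1),2) ] = C(k+2,2) + f1·C(k+2−(r+1),2) − n·[ C(k+2,2) − C(r+2,2) ] + Σ_{i=1}^{n} Σ_{j=1}^{k−r} max(r + j + 1 − j·t_i, 0). (Equivalently: the homological lower bound formula for dim C_k^r(Δ) coincides with Schumaker's lower bound formula, for any combinatorial data f1 and t_1,…,t_n.) -/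

import Mathlib

/-- `Ω t r = ⌊t·r/(t-1)⌋ + 1`, the floor taken in `ℚ`. -/
noncomputable def Omega (t r : ℤ) : ℤ := ⌊(t * r : ℚ) / ((t : ℚ) - 1)⌋ + 1

/-- `a t r = t·(r+1) + (1−t)·Ω(t,r)`. -/
noncomputable def aa (t r : ℤ) : ℤ := t * (r + 1) + (1 - t) * Omega t r

/-- `b t r = t − 1 − a(t,r)`. -/
noncomputable def bb (t r : ℤ) : ℤ := t - 1 - aa t r

/-- `C2 m = C(m, 2)`, with the convention that it is `0` for `m < 2`
(truncation via `Int.toNat`). -/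
def C2 (m : ℤ) : ℤ := ((m.toNat).choose 2 : ℤ)

/-!
Write `r = q (t - 1) + ρ` with `0 ≤ ρ < t - 1`; then `Ω = r + q + 1`, `a = ρ + 1` and
`b = t - 2 - ρ`. For a single face, both sides vanish at `k = r`, and since
`C(m + 1, 2) - C(m, 2) = max m 0` their increments in `k` agree: with `m = k + 1 - r`, for `m ≤ q`
the `b`- and `a`-terms are still zero and the new Schumaker term `r + m + 1 - m t` is positive,
while for `m > q` that term is cut off at `0` and `b (m - q) + a (m - q - 1)` absorbs the
surplus `t m - (m + r + 1)`.
-/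

lemma C2_eq_zero_of_le_one {m : ℤ} (h : m ≤ 1) : C2 m = 0 := by
  rw [C2, Nat.choose_eq_zero_of_lt (by omega), Nat.cast_zero]

lemma C2_add_one (m : ℤ) : C2 (m + 1) = C2 m + max m 0 := by
  rcases le_or_gt m 0 with hm | hm
  · rw [C2_eq_zero_of_le_one (by omega), C2_eq_zero_of_le_one (by omega), max_eq_right hm,
      add_zero]
  · rw [C2, C2, show (m + 1).toNat = m.toNat + 1 by omega, Nat.choose_succ_succ',
      Nat.choose_one_right, max_eq_left hm.le]
    push_cast
    omega

lemma Omega_eq_add_ediv {t : ℤ} (ht : 2 ≤ t) (r : ℤ) : Omega t r = r + r / (t - 1) + 1 := by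
  obtain ⟨s, hs⟩ : ∃ s : ℕ, t - 1 = s := ⟨(t - 1).toNat, by omega⟩
  have hts : (t : ℚ) * r / (t - 1) = ((r + r * s : ℤ) : ℚ) / (s : ℕ) := by
    rw [show (t : ℚ) - 1 = s by exact_mod_cast hs, show t = s + 1 by omega]
    push_cast
    ring
  rw [Omega, hts, Rat.floor_intCast_div_natCast, hs,
    Int.add_mul_ediv_right _ _ (by omega : (s : ℤ) ≠ 0)]
  ring

lemma aa_eq_emod_add_one {t : ℤ} (ht : 2 ≤ t) (r : ℤ) : aa t r = r % (t - 1) + 1 := by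
  rw [aa, Omega_eq_add_ediv ht, Int.emod_def]
  ring

lemma bb_eq_sub_emod {t : ℤ} (ht : 2 ≤ t) (r : ℤ) : bb t r = t - 2 - r % (t - 1) := by
  rw [bb, aa_eq_emod_add_one ht]
  ring

lemma face_increment {t : ℤ} (ht : 2 ≤ t) (r : ℤ) {m : ℤ} (hm : 1 ≤ m) :
    t * max m 0 - bb t r * max (m - r / (t - 1)) 0 - aa t r * max (m - r / (t - 1) - 1) 0
      = m + r + 1 - max (r + m + 1 - m * t) 0 := by
  have hdiv := Int.ediv_mul_add_emod r (t - 1)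
  have hmod_nonneg := Int.emod_nonneg r (by omega : t - 1 ≠ 0)
  have hmod_lt := Int.emod_lt_of_pos r (by omega : 0 < t - 1)
  rw [aa_eq_emod_add_one ht, bb_eq_sub_emod ht]
  set q := r / (t - 1)
  rcases le_or_gt m q with hmq | hqm
  · have hgap : 0 ≤ (q - m) * (t - 1) := mul_nonneg (by omega) (by omega)
    rw [max_eq_left (by omega), max_eq_right (by omega), max_eq_right (by omega),
      max_eq_left (by linarith)]
    ring
  · have hgap : t - 1 ≤ (m - q) * (t - 1) := le_mul_of_one_le_left (by omega) (by omega)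
    rw [max_eq_left (by omega), max_eq_left (by omega), max_eq_left (by omega),
      max_eq_right (by linarith)]
    linear_combination hdiv

lemma sum_Icc_add_one {a b : ℤ} (h : a ≤ b + 1) (f : ℤ → ℤ) :
    ∑ j ∈ Finset.Icc a (b + 1), f j = ∑ j ∈ Finset.Icc a b, f j + f (b + 1) := by
  rw [← Finset.insert_Icc_right_eq_Icc_add_one h, Finset.sum_insert (by simp), add_comm]

lemma face_contribution {t : ℤ} (ht : 2 ≤ t) {r k : ℤ} (hr : 0 ≤ r) (hk : r ≤ k) :
    t * C2 (k + 2 - (r + 1)) - bb t r * C2 (k + 2 - Omega t r)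
        - aa t r * C2 (k + 2 - (Omega t r + 1))
      = C2 (k + 2) - C2 (r + 2)
        - ∑ j ∈ Finset.Icc (1 : ℤ) (k - r), max (r + j + 1 - j * t) 0 := by
  have hq : 0 ≤ r / (t - 1) := Int.ediv_nonneg hr (by omega)
  rw [Omega_eq_add_ediv ht]
  induction k, hk using Int.leInduction with
  | base =>
    rw [C2_eq_zero_of_le_one (by omega), C2_eq_zero_of_le_one (by omega),
      C2_eq_zero_of_le_one (by omega), sub_self, Finset.Icc_eq_empty (by omega)]
    simp
  | succ k hk ih =>
    have hstep := face_increment ht r (m := k + 1 - r) (by omega)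
    have hsum := sum_Icc_add_one (a := 1) (b := k - r) (by omega)
      (fun j => max (r + j + 1 - j * t) 0)
    have hΔr := C2_add_one (k + 2 - (r + 1))
    have hΔΩ := C2_add_one (k + 2 - (r + r / (t - 1) + 1))
    have hΔΩ' := C2_add_one (k + 2 - (r + r / (t - 1) + 1 + 1))
    have hΔk := C2_add_one (k + 2)
    rw [max_eq_left (by omega : (0 : ℤ) ≤ k + 2)] at hΔk
    ring_nf at ih hstep hsum hΔr hΔΩ hΔΩ' hΔk ⊢
    linear_combination ih + hstep + t * hΔr - bb t r * hΔΩ - aa t r * hΔΩ' - hΔk + hsum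

theorem stmt_6_general (r k : ℤ) (hr : 0 ≤ r) (hk : k ≥ r) (n : ℕ) (f1 : ℤ)
    (t : Fin n → ℤ) (ht : ∀ i, 2 ≤ t i) :
    C2 (k + 2) + f1 * C2 (k + 2 - (r + 1))
      - ∑ i : Fin n, (t i * C2 (k + 2 - (r + 1))
          - bb (t i) r * C2 (k + 2 - Omega (t i) r)
          - aa (t i) r * C2 (k + 2 - (Omega (t i) r + 1)))
    = C2 (k + 2) + f1 * C2 (k + 2 - (r + 1))
      - n * (C2 (k + 2) - C2 (r + 2))
      + ∑ i : Fin n, ∑ j ∈ Finset.Icc (1 : ℤ) (k - r), max (r + j + 1 - j * t i) 0 := by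
  simp only [face_contribution (ht _) hr hk, Finset.sum_sub_distrib, Finset.sum_const,
    Finset.card_univ, Fintype.card_fin, nsmul_eq_mul]
  ring

theorem stmt_6 (r k : ℤ) (hr : 0 ≤ r) (hk : k ≥ r) (n : ℕ) (f1 : ℤ) (hf1 : 0 ≤ f1)
    (t : Fin n → ℤ) (ht : ∀ i, 2 ≤ t i) :
    C2 (k + 2) + f1 * C2 (k + 2 - (r + 1))
      - ∑ i : Fin n, (t i * C2 (k + 2 - (r + 1))
          - bb (t i) r * C2 (k + 2 - Omega (t i) r)
          - aa (t i) r * C2 (k + 2 - (Omega (t i) r + 1)))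
    = C2 (k + 2) + f1 * C2 (k + 2 - (r + 1))
      - n * (C2 (k + 2) - C2 (r + 2))
      + ∑ i : Fin n, ∑ j ∈ Finset.Icc (1 : ℤ) (k - r), max (r + j + 1 - j * t i) 0 :=
  stmt_6_general r k hr hk n f1 t ht
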